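/- Let 0 < r₁ < r < 1, a > 0 and λ ≥ 1. Let v̄_{λ,r} : ℝ² → ℝ be as defined, and let φ : ℝ² → ℝ be infinitely differentiable with φ = 1 on {|x| ≤ r₁}, 0 ≤ φ ≤ 1, φ = 0 on {|x| ≥ r}, and ⟨x, ∇φ(x)⟩ ≤ 0 for all x. Set v₀ := a·v̄_{λ,r}·φ, A₁ := sup_{r₁ ≤ |z| ≤ r} |∇φ(z)| and A₂ := sup_{r₁ ≤ |z| ≤ r} |Δφ(z)|. Then for every x ∈ ℝ², −Δv₀(x) + v₀(x) ≥ −(8a/r₁)·A₁ − a·(4 ln(r/r₁) + ln 8)·A₂; in particular −Δv₀ + v₀ is bounded below by a constant −K with K > 0 independent of λ. -/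

import Mathlib

/-- The function `v̄_{λ,r}(x) = 2 ln((1+λ²r²)/(1+λ²|x|²)) + ln 8` on `ℝ²`. -/
noncomputable def vbar (l r : ℝ) (x : EuclideanSpace ℝ (Fin 2)) : ℝ :=
  2 * Real.log ((1 + l ^ 2 * r ^ 2) / (1 + l ^ 2 * ‖x‖ ^ 2)) + Real.log 8

/-- The Laplacian of `f : ℝ² → ℝ`: the sum of the second partial derivatives of
`f` along the standard orthonormal basis of `ℝ²`. -/
noncomputable def laplacian (f : EuclideanSpace ℝ (Fin 2) → ℝ)
    (x : EuclideanSpace ℝ (Fin 2)) : ℝ :=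
  ∑ i : Fin 2,
    fderiv ℝ (fun y => fderiv ℝ f y (EuclideanSpace.basisFun (Fin 2) ℝ i)) x
      (EuclideanSpace.basisFun (Fin 2) ℝ i)

section Aux

local notation "E2" => EuclideanSpace ℝ (Fin 2)
local notation "e" => EuclideanSpace.basisFun (Fin 2) ℝ

lemma upos (l : ℝ) (x : E2) : (0:ℝ) < 1 + l^2*‖x‖^2 := by positivity

lemma vbar_eq (l r : ℝ) (x : E2) :
    vbar l r x = (2*Real.log (1+l^2*r^2) + Real.log 8) - 2*Real.log (1+l^2*‖x‖^2) := by
  unfold vbar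
  rw [Real.log_div (by positivity) (by positivity)]; ring

lemma hasFDerivAt_vbar (l r : ℝ) (x : E2) :
    HasFDerivAt (vbar l r) ((-4*l^2/(1+l^2*‖x‖^2)) • (innerSL ℝ x)) x := by
  have hfun : vbar l r = fun y : E2 => (2*Real.log (1+l^2*r^2) + Real.log 8) - 2*Real.log (1+l^2*‖y‖^2) :=
    funext (vbar_eq l r)
  have h1 : HasFDerivAt (fun y : E2 => 1 + l^2*‖y‖^2) ((l^2) • (2 • (innerSL ℝ x))) x :=
    (((hasStrictFDerivAt_norm_sq x).hasFDerivAt).const_mul (l^2)).const_add 1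
  have h2 := (h1.log (ne_of_gt (upos l x))).const_mul 2
  have h3 := h2.const_sub (2*Real.log (1+l^2*r^2) + Real.log 8)
  rw [← hfun] at h3
  refine h3.congr_fderiv ?_
  ext v
  simp only [ContinuousLinearMap.smul_apply, ContinuousLinearMap.neg_apply, smul_eq_mul]
  field_simp [(upos l x).ne']
  ring

lemma inner_basis (x : E2) (i : Fin 2) : (innerSL ℝ x) (e i) = x i := by
  simp [EuclideanSpace.basisFun_apply, EuclideanSpace.inner_single_right]

lemma fderiv_vbar_apply (l r : ℝ) (x : E2) (i : Fin 2) :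
    fderiv ℝ (vbar l r) x (e i) = -4*l^2/(1+l^2*‖x‖^2) * x i := by
  rw [(hasFDerivAt_vbar l r x).fderiv]
  simp only [ContinuousLinearMap.coe_smul', Pi.smul_apply, inner_basis, smul_eq_mul]

lemma hasFDerivAt_coord (x : E2) (i : Fin 2) :
    HasFDerivAt (fun y : E2 => y i) (EuclideanSpace.proj (𝕜 := ℝ) i) x :=
  (EuclideanSpace.proj (𝕜 := ℝ) i).hasFDerivAt

lemma second_vbar (l r : ℝ) (x : E2) (i : Fin 2) :
    fderiv ℝ (fun y => fderiv ℝ (vbar l r) y (e i)) x (e i)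
      = 8*l^4*(x i)^2/(1+l^2*‖x‖^2)^2 - 4*l^2/(1+l^2*‖x‖^2) := by
  have hfun : (fun y : E2 => fderiv ℝ (vbar l r) y (e i))
      = fun y : E2 => (-4*l^2) * (1+l^2*‖y‖^2)⁻¹ * y i := by
    funext y
    rw [fderiv_vbar_apply]
    ring
  rw [hfun]
  have h1 : HasFDerivAt (fun y : E2 => 1 + l^2*‖y‖^2) ((l^2) • (2 • (innerSL ℝ x))) x :=
    (((hasStrictFDerivAt_norm_sq x).hasFDerivAt).const_mul (l^2)).const_add 1
  have hinv : HasDerivAt (fun t : ℝ => t⁻¹) (-(((1+l^2*‖x‖^2):ℝ)^2)⁻¹) (1+l^2*‖x‖^2) :=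
    hasDerivAt_inv (ne_of_gt (upos l x))
  have h2 := (hinv.comp_hasFDerivAt x h1).const_mul (-4*l^2)
  have h3 := h2.mul (hasFDerivAt_coord x i)
  simp only [Function.comp_def] at h3
  rw [show (fun y : E2 => -4*l^2*(1+l^2*‖y‖^2)⁻¹ * y i) = (fun y : E2 => -4*l^2*(1+l^2*‖y‖^2)⁻¹) * (fun y : E2 => y i) from rfl, h3.fderiv]
  have hxi : (innerSL ℝ x) (e i) = x i := inner_basis x i
  have hproj : (EuclideanSpace.proj (𝕜 := ℝ) i) (e i) = 1 := by
    simp [EuclideanSpace.basisFun_apply]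
  simp only [ContinuousLinearMap.add_apply, ContinuousLinearMap.smul_apply,
    ContinuousLinearMap.neg_apply, smul_eq_mul, hxi, hproj]
  field_simp [(upos l x).ne']
  ring

lemma sum_coord_sq (x : E2) : ∑ i : Fin 2, (x i)^2 = ‖x‖^2 := by
  rw [EuclideanSpace.norm_eq]
  rw [Real.sq_sqrt (by positivity)]
  simp [sq_abs]

lemma lap_vbar (l r : ℝ) (x : E2) :
    laplacian (vbar l r) x = -8*l^2/(1+l^2*‖x‖^2)^2 := by
  unfold laplacian
  simp only [second_vbar]
  rw [Fin.sum_univ_two]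
  have hn : ‖x‖^2 = x 0^2 + x 1^2 := by rw [← sum_coord_sq x, Fin.sum_univ_two]
  rw [hn]
  have hu : (0:ℝ) < 1 + l^2*(x 0^2 + x 1^2) := by positivity
  field_simp
  ring

lemma diff_pderiv {f : E2 → ℝ} (hf : ContDiff ℝ (⊤ : ℕ∞) f) (i : Fin 2) :
    Differentiable ℝ (fun y => fderiv ℝ f y (e i)) :=
  ((hf.fderiv_right (m := (⊤ : ℕ∞)) (by simp)).clm_apply contDiff_const).differentiable (by simp)

lemma cont_pderiv2 {f : E2 → ℝ} (hf : ContDiff ℝ (⊤ : ℕ∞) f) (i : Fin 2) :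
    Continuous (fun z => fderiv ℝ (fun y => fderiv ℝ f y (e i)) z (e i)) := by
  have h1 : ContDiff ℝ (⊤ : ℕ∞) (fun y => fderiv ℝ f y (e i)) :=
    (hf.fderiv_right (by simp)).clm_apply contDiff_const
  have h2 : ContDiff ℝ (⊤ : ℕ∞) (fun z => fderiv ℝ (fun y => fderiv ℝ f y (e i)) z (e i)) :=
    (h1.fderiv_right (by simp)).clm_apply contDiff_const
  exact h2.continuous

lemma continuous_laplacian {f : E2 → ℝ} (hf : ContDiff ℝ (⊤ : ℕ∞) f) :
    Continuous (laplacian f) := by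
  unfold laplacian
  exact continuous_finset_sum _ (fun i _ => cont_pderiv2 hf i)

lemma laplacian_mul (f g : E2 → ℝ) (hf : ContDiff ℝ (⊤ : ℕ∞) f) (hg : ContDiff ℝ (⊤ : ℕ∞) g) (x : E2) :
    laplacian (fun y => f y * g y) x = laplacian f x * g x
      + 2 * ∑ i : Fin 2, fderiv ℝ f x (e i) * fderiv ℝ g x (e i) + f x * laplacian g x := by
  have hfd : Differentiable ℝ f := hf.differentiable (by simp)
  have hgd : Differentiable ℝ g := hg.differentiable (by simp)
  have key : ∀ i : Fin 2, fderiv ℝ (fun y => fderiv ℝ (fun z => f z * g z) y (e i)) x (e i)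
      = fderiv ℝ (fun y => fderiv ℝ f y (e i)) x (e i) * g x
        + 2 * (fderiv ℝ f x (e i) * fderiv ℝ g x (e i))
        + f x * fderiv ℝ (fun y => fderiv ℝ g y (e i)) x (e i) := by
    intro i
    have hFd := diff_pderiv hf i
    have hGd := diff_pderiv hg i
    have hfun : (fun y => fderiv ℝ (fun z => f z * g z) y (e i))
        = fun y => f y * fderiv ℝ g y (e i) + g y * fderiv ℝ f y (e i) := by
      funext y
      rw [fderiv_fun_mul (hfd y) (hgd y)]
      simp
    rw [hfun, fderiv_fun_add ((hfd x).fun_mul (hGd x)) ((hgd x).fun_mul (hFd x)),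
      fderiv_fun_mul (hfd x) (hGd x), fderiv_fun_mul (hgd x) (hFd x)]
    simp only [ContinuousLinearMap.add_apply, ContinuousLinearMap.smul_apply, smul_eq_mul]
    ring
  unfold laplacian
  simp only [key]
  rw [Fin.sum_univ_two, Fin.sum_univ_two, Fin.sum_univ_two, Fin.sum_univ_two]
  ring

lemma laplacian_const_mul (f : E2 → ℝ) (hf : ContDiff ℝ (⊤ : ℕ∞) f) (a : ℝ) (x : E2) :
    laplacian (fun y => a * f y) x = a * laplacian f x := by
  have hfd : Differentiable ℝ f := hf.differentiable (by simp)
  have key : ∀ i : Fin 2, fderiv ℝ (fun y => fderiv ℝ (fun z => a * f z) y (e i)) x (e i)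
      = a * fderiv ℝ (fun y => fderiv ℝ f y (e i)) x (e i) := by
    intro i
    have hFd := diff_pderiv hf i
    have hfun : (fun y => fderiv ℝ (fun z => a * f z) y (e i))
        = fun y => a * fderiv ℝ f y (e i) := by
      funext y
      rw [fderiv_const_mul (hfd y)]
      simp
    rw [hfun, fderiv_const_mul (hFd x)]
    simp
  unfold laplacian
  simp only [key]
  rw [Fin.sum_univ_two, Fin.sum_univ_two]
  ring

lemma fderiv_zero_on_open {f : E2 → ℝ} {s : Set E2} (hs : IsOpen s) {c : ℝ}
    (h : ∀ y ∈ s, f y = c) : ∀ y ∈ s, fderiv ℝ f y = 0 := by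
  intro y hy
  have heq : f =ᶠ[nhds y] fun _ => c := Filter.eventually_of_mem (hs.mem_nhds hy) h
  rw [heq.fderiv_eq]
  exact fderiv_const_apply c

lemma laplacian_zero_on_open {f : E2 → ℝ} {s : Set E2} (hs : IsOpen s) {c : ℝ}
    (h : ∀ y ∈ s, f y = c) {x : E2} (hx : x ∈ s) : laplacian f x = 0 := by
  unfold laplacian
  have h1 : ∀ i : Fin 2, fderiv ℝ (fun y => fderiv ℝ f y (e i)) x (e i) = 0 := by
    intro i
    have heq : (fun y => fderiv ℝ f y (e i)) =ᶠ[nhds x] fun _ => (0:ℝ) :=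
      Filter.eventually_of_mem (hs.mem_nhds hx)
        (fun y hy => by show fderiv ℝ f y (e i) = 0
                        rw [fderiv_zero_on_open hs h y hy]; rfl)
    rw [heq.fderiv_eq, fderiv_const_apply]
    rfl
  rw [Fin.sum_univ_two, h1 0, h1 1]
  ring

lemma gradient_zero_on_open {f : E2 → ℝ} {s : Set E2} (hs : IsOpen s) {c : ℝ}
    (h : ∀ y ∈ s, f y = c) {x : E2} (hx : x ∈ s) : gradient f x = 0 := by
  unfold gradient
  rw [fderiv_zero_on_open hs h x hx, map_zero]

lemma inner_gradient (f : E2 → ℝ) (x v : E2) :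
    (inner ℝ (gradient f x) v : ℝ) = fderiv ℝ f x v := by
  unfold gradient
  exact InnerProductSpace.toDual_symm_apply

lemma contDiff_vbar (l r : ℝ) : ContDiff ℝ (⊤ : ℕ∞) (vbar l r) := by
  have h1 : ContDiff ℝ (⊤ : ℕ∞) (fun y : E2 => 1 + l^2*‖y‖^2) :=
    contDiff_const.add (contDiff_const.mul (contDiff_norm_sq ℝ))
  have h2 : ContDiff ℝ (⊤ : ℕ∞) (fun y : E2 => Real.log (1 + l^2*‖y‖^2)) :=
    h1.log (fun y => (upos l y).ne')
  have : vbar l r = fun y : E2 =>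
      (2*Real.log (1+l^2*r^2) + Real.log 8) - 2*Real.log (1+l^2*‖y‖^2) :=
    funext (vbar_eq l r)
  rw [this]
  exact contDiff_const.sub (contDiff_const.mul h2)

lemma vbar_nonneg (l r : ℝ) (x : E2) (hx : ‖x‖ ≤ r) : 0 ≤ vbar l r x := by
  have h1 : (1:ℝ) ≤ (1 + l^2*r^2)/(1 + l^2*‖x‖^2) := by
    rw [le_div_iff₀ (upos l x)]
    have hx2 : ‖x‖^2 ≤ r^2 := by nlinarith [norm_nonneg x]
    nlinarith [mul_le_mul_of_nonneg_left hx2 (sq_nonneg l)]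
  have := Real.log_nonneg h1
  have h8 : (0:ℝ) ≤ Real.log 8 := Real.log_nonneg (by norm_num)
  unfold vbar; linarith

lemma vbar_upper (l r r₁ : ℝ) (hr₁ : 0 < r₁) (hrr : r₁ ≤ r) (x : E2) (hx : r₁ ≤ ‖x‖) :
    vbar l r x ≤ 4*Real.log (r/r₁) + Real.log 8 := by
  have hu := upos l x
  have hr : 0 < r := lt_of_lt_of_le hr₁ hrr
  have h1 : (1 + l^2*r^2)/(1 + l^2*‖x‖^2) ≤ (r/r₁)^2 := by
    rw [div_le_iff₀ hu, div_pow, div_mul_eq_mul_div, le_div_iff₀ (by positivity)]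
    have hx2 : r₁^2 ≤ ‖x‖^2 := by nlinarith
    have h12 : r₁^2 ≤ r^2 := by nlinarith
    nlinarith [mul_le_mul_of_nonneg_left hx2 (mul_nonneg (sq_nonneg l) (sq_nonneg r))]
  have h2 : Real.log ((1 + l^2*r^2)/(1 + l^2*‖x‖^2)) ≤ Real.log ((r/r₁)^2) :=
    Real.log_le_log (by positivity) h1
  have h3 : Real.log ((r/r₁)^2) = 2 * Real.log (r/r₁) := by
    rw [Real.log_pow]; push_cast; ring
  unfold vbar
  rw [h3] at h2
  linarith

lemma annulus_compact (r₁ r : ℝ) :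
    IsCompact {z : E2 | r₁ ≤ ‖z‖ ∧ ‖z‖ ≤ r} := by
  have hc : IsClosed {z : E2 | r₁ ≤ ‖z‖ ∧ ‖z‖ ≤ r} := by
    have : {z : E2 | r₁ ≤ ‖z‖ ∧ ‖z‖ ≤ r} = (fun z : E2 => ‖z‖) ⁻¹' (Set.Icc r₁ r) := rfl
    rw [this]
    exact isClosed_Icc.preimage continuous_norm
  have hb : Bornology.IsBounded {z : E2 | r₁ ≤ ‖z‖ ∧ ‖z‖ ≤ r} := by
    apply (Metric.isBounded_closedBall (x := (0:E2)) (r := r)).subset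
    intro z hz
    simpa [Metric.mem_closedBall, dist_zero_right] using hz.2
  exact Metric.isCompact_of_isClosed_isBounded hc hb

lemma annulus_nonempty (r₁ r : ℝ) (hr₁ : 0 ≤ r₁) (hrr : r₁ ≤ r) :
    (EuclideanSpace.single (0 : Fin 2) r₁ : E2) ∈ {z : E2 | r₁ ≤ ‖z‖ ∧ ‖z‖ ≤ r} := by
  have : ‖(EuclideanSpace.single (0 : Fin 2) r₁ : E2)‖ = r₁ := by
    rw [EuclideanSpace.norm_single]
    exact abs_of_nonneg hr₁
  exact ⟨this.ge, this.le.trans hrr⟩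

lemma continuous_grad_norm {φ : E2 → ℝ} (hφ : ContDiff ℝ (⊤ : ℕ∞) φ) :
    Continuous (fun z => ‖gradient φ z‖) := by
  have h : Continuous (fun z => gradient φ z) := by
    unfold gradient
    exact ((InnerProductSpace.toDual ℝ _).symm.continuous).comp (hφ.continuous_fderiv (by simp))
  exact h.norm

lemma k2_lemma (l nx : ℝ) : l^2*nx*nx ≤ 1 + l^2*nx^2 := by nlinarith

lemma coef_bound (l r₁ nx u : ℝ) (hr₁ : 0 < r₁) (hx1 : r₁ ≤ nx)
    (hupos : 0 < u) (k2 : l^2*nx*nx ≤ u) : (8*l^2/u) * nx ≤ 8/r₁ := by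
  rw [div_mul_eq_mul_div, div_le_div_iff₀ hupos hr₁]
  have hnx0 : 0 ≤ nx := le_trans hr₁.le hx1
  have k1 : l^2*nx*r₁ ≤ l^2*nx*nx :=
    mul_le_mul_of_nonneg_left hx1 (mul_nonneg (sq_nonneg l) hnx0)
  nlinarith

lemma cross_bound (l r₁ A₁ nx u G : ℝ) (hr₁ : 0 < r₁) (hx1 : r₁ ≤ nx)
    (hupos : 0 < u) (k2 : l^2*nx*nx ≤ u) (hA₁0 : 0 ≤ A₁)
    (hG1 : -(nx*A₁) ≤ G) : -((8/r₁)*A₁) ≤ (8*l^2/u)*G := by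
  have hc8 : 0 ≤ 8*l^2/u := div_nonneg (by positivity) hupos.le
  have step1 := mul_le_mul_of_nonneg_left hG1 hc8
  have step2 := coef_bound l r₁ nx u hr₁ hx1 hupos k2
  have step3 : (8*l^2/u) * (nx * A₁) ≤ (8/r₁) * A₁ := by
    rw [← mul_assoc]
    exact mul_le_mul_of_nonneg_right step2 hA₁0
  nlinarith

lemma final_arith (a r₁ A₁ A₂ B₂ l u G L vb px : ℝ)
    (ha : 0 < a) (hr₁ : 0 < r₁) (hupos : 0 < u)
    (hpx0 : 0 ≤ px)
    (h4 : 0 ≤ vb * px)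
    (h2 : -((8/r₁) * A₁) ≤ (8*l^2/u) * G)
    (h3 : vb * L ≤ B₂ * A₂) :
    -(a * (-8*l^2/u^2 * px + 2 * (-4*l^2/u * G) + vb * L)) + a * vb * px
      ≥ -(8 * a / r₁) * A₁ - a * B₂ * A₂ := by
  have h1 : 0 ≤ 8*l^2/u^2 * px :=
    mul_nonneg (div_nonneg (by positivity) (sq_nonneg u)) hpx0
  have hsum : -((8/r₁) * A₁) - B₂ * A₂
      ≤ 8*l^2/u^2 * px + (8*l^2/u) * G - vb * L + vb * px := by linarith
  have hfinal := mul_le_mul_of_nonneg_left hsum ha.le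
  calc -(a * (-8*l^2/u^2 * px + 2 * (-4*l^2/u * G) + vb * L)) + a * vb * px
      = a * (8*l^2/u^2 * px + (8*l^2/u) * G - vb * L + vb * px) := by ring
    _ ≥ a * (-((8/r₁) * A₁) - B₂ * A₂) := hfinal
    _ = -(8 * a / r₁) * A₁ - a * B₂ * A₂ := by ring

/-- The main quantitative bound, for any `l ≥ 1`. -/
lemma main_bound (r₁ r a : ℝ) (hr₁ : 0 < r₁) (hr : r₁ < r) (ha : 0 < a)
    (φ : E2 → ℝ) (hφ : ContDiff ℝ (⊤ : ℕ∞) φ)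
    (hφ1 : ∀ x : E2, ‖x‖ ≤ r₁ → φ x = 1)
    (hφ01 : ∀ x : E2, 0 ≤ φ x ∧ φ x ≤ 1)
    (hφ0 : ∀ x : E2, r ≤ ‖x‖ → φ x = 0)
    (A₁ A₂ : ℝ)
    (hA₁ : A₁ = sSup ((fun z : E2 => ‖gradient φ z‖) '' {z : E2 | r₁ ≤ ‖z‖ ∧ ‖z‖ ≤ r}))
    (hA₂ : A₂ = sSup ((fun z : E2 => |laplacian φ z|) '' {z : E2 | r₁ ≤ ‖z‖ ∧ ‖z‖ ≤ r}))
    (l : ℝ) (hl : 1 ≤ l) (x : E2) :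
    -(laplacian (fun z => a * vbar l r z * φ z) x) + a * vbar l r x * φ x ≥
      -(8 * a / r₁) * A₁ - a * (4 * Real.log (r / r₁) + Real.log 8) * A₂ := by
  classical
  have hbdd1 : BddAbove ((fun z : E2 => ‖gradient φ z‖) '' {z : E2 | r₁ ≤ ‖z‖ ∧ ‖z‖ ≤ r}) :=
    ((annulus_compact r₁ r).image (continuous_grad_norm hφ)).bddAbove
  have hbdd2 : BddAbove ((fun z : E2 => |laplacian φ z|) '' {z : E2 | r₁ ≤ ‖z‖ ∧ ‖z‖ ≤ r}) :=
    ((annulus_compact r₁ r).image (continuous_laplacian hφ).abs).bddAbove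
  have hz₀ := annulus_nonempty r₁ r hr₁.le hr.le
  have hA₁0 : 0 ≤ A₁ := by
    rw [hA₁]
    exact le_trans (norm_nonneg _) (le_csSup hbdd1 ⟨_, hz₀, rfl⟩)
  have hA₂0 : 0 ≤ A₂ := by
    rw [hA₂]
    exact le_trans (abs_nonneg _) (le_csSup hbdd2 ⟨_, hz₀, rfl⟩)
  have hB₂0 : 0 ≤ 4 * Real.log (r / r₁) + Real.log 8 := by
    have h1 : 0 ≤ Real.log (r / r₁) :=
      Real.log_nonneg (by rw [le_div_iff₀ hr₁]; linarith)
    have h2 : (0:ℝ) ≤ Real.log 8 := Real.log_nonneg (by norm_num)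
    linarith
  have hupos : (0:ℝ) < 1 + l^2*‖x‖^2 := upos l x
  obtain ⟨hφx0, hφx1⟩ := hφ01 x
  -- rewrite the Laplacian of the product
  have hassoc : (fun z : E2 => a * vbar l r z * φ z) = fun z : E2 => a * (vbar l r z * φ z) := by
    funext z; ring
  rw [hassoc, laplacian_const_mul _ ((contDiff_vbar l r).mul hφ) a x,
    laplacian_mul _ _ (contDiff_vbar l r) hφ x, lap_vbar]
  -- the cross term
  have hg : ∀ i : Fin 2, fderiv ℝ φ x (e i) = gradient φ x i := by
    intro i
    rw [← inner_gradient]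
    have := inner_basis (gradient φ x) i
    simpa using this
  have hinner : (inner ℝ x (gradient φ x) : ℝ) = ∑ i : Fin 2, x i * gradient φ x i := by
    rw [PiLp.inner_apply]
    simp [RCLike.inner_apply]
    ring
  have hCr : ∑ i : Fin 2, fderiv ℝ (vbar l r) x (e i) * fderiv ℝ φ x (e i)
      = (-4*l^2/(1+l^2*‖x‖^2)) * (inner ℝ x (gradient φ x) : ℝ) := by
    rw [hinner, Finset.mul_sum]
    refine Finset.sum_congr rfl (fun i _ => ?_)
    rw [fderiv_vbar_apply, hg i]; ring
  rw [hCr]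
  -- componentwise bounds
  have h4 : 0 ≤ vbar l r x * φ x := by
    by_cases hxr : ‖x‖ ≤ r
    · exact mul_nonneg (vbar_nonneg l r x hxr) hφx0
    · rw [hφ0 x (le_of_not_ge hxr), mul_zero]
  have h2 : -((8/r₁) * A₁) ≤ (8*l^2/(1+l^2*‖x‖^2)) * (inner ℝ x (gradient φ x) : ℝ) := by
    by_cases hlt : ‖x‖ < r₁
    · have hgz : gradient φ x = 0 :=
        gradient_zero_on_open (isOpen_lt continuous_norm continuous_const)
          (c := 1) (fun y hy => hφ1 y (le_of_lt hy)) hlt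
      have hG0 : (inner ℝ x (gradient φ x) : ℝ) = 0 := by rw [hgz, inner_zero_right]
      rw [hG0, mul_zero]
      exact neg_nonpos_of_nonneg (mul_nonneg (by positivity) hA₁0)
    · by_cases hgt : r < ‖x‖
      · have hgz : gradient φ x = 0 :=
          gradient_zero_on_open (isOpen_lt continuous_const continuous_norm)
            (c := 0) (fun y hy => hφ0 y (le_of_lt hy)) hgt
        have hG0 : (inner ℝ x (gradient φ x) : ℝ) = 0 := by rw [hgz, inner_zero_right]
        rw [hG0, mul_zero]
        exact neg_nonpos_of_nonneg (mul_nonneg (by positivity) hA₁0)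
      · have hx1 : r₁ ≤ ‖x‖ := le_of_not_gt hlt
        have hx2 : ‖x‖ ≤ r := le_of_not_gt hgt
        have hgA : ‖gradient φ x‖ ≤ A₁ := by
          rw [hA₁]; exact le_csSup hbdd1 ⟨x, ⟨hx1, hx2⟩, rfl⟩
        have habs : |(inner ℝ x (gradient φ x) : ℝ)| ≤ ‖x‖ * ‖gradient φ x‖ :=
          abs_real_inner_le_norm x _
        have h5 : ‖x‖ * ‖gradient φ x‖ ≤ ‖x‖ * A₁ :=
          mul_le_mul_of_nonneg_left hgA (norm_nonneg x)
        have hG1 : -(‖x‖*A₁) ≤ (inner ℝ x (gradient φ x) : ℝ) :=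
          (abs_le.1 (habs.trans h5)).1
        have k2 : l^2*‖x‖*‖x‖ ≤ 1 + l^2*‖x‖^2 := k2_lemma l ‖x‖
        exact cross_bound l r₁ A₁ ‖x‖ (1 + l^2*‖x‖^2) _ hr₁ hx1 hupos k2 hA₁0 hG1
  have h3 : vbar l r x * laplacian φ x
      ≤ (4 * Real.log (r / r₁) + Real.log 8) * A₂ := by
    by_cases hlt : ‖x‖ < r₁
    · have hlz : laplacian φ x = 0 :=
        laplacian_zero_on_open (isOpen_lt continuous_norm continuous_const)
          (c := 1) (fun y hy => hφ1 y (le_of_lt hy)) hlt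
      rw [hlz, mul_zero]
      exact mul_nonneg hB₂0 hA₂0
    · by_cases hgt : r < ‖x‖
      · have hlz : laplacian φ x = 0 :=
          laplacian_zero_on_open (isOpen_lt continuous_const continuous_norm)
            (c := 0) (fun y hy => hφ0 y (le_of_lt hy)) hgt
        rw [hlz, mul_zero]
        exact mul_nonneg hB₂0 hA₂0
      · have hx1 : r₁ ≤ ‖x‖ := le_of_not_gt hlt
        have hx2 : ‖x‖ ≤ r := le_of_not_gt hgt
        have hLA : |laplacian φ x| ≤ A₂ := by
          rw [hA₂]; exact le_csSup hbdd2 ⟨x, ⟨hx1, hx2⟩, rfl⟩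
        have hvb0 : 0 ≤ vbar l r x := vbar_nonneg l r x hx2
        have hvbU : vbar l r x ≤ 4 * Real.log (r / r₁) + Real.log 8 :=
          vbar_upper l r r₁ hr₁ hr.le x hx1
        exact (mul_le_mul_of_nonneg_left (le_trans (le_abs_self _) hLA) hvb0).trans
          (mul_le_mul_of_nonneg_right hvbU hA₂0)
  exact final_arith a r₁ A₁ A₂ (4 * Real.log (r / r₁) + Real.log 8) l
    (1 + l^2*‖x‖^2) _ _ _ _ ha hr₁ hupos hφx0 h4 h2 h3

end Aux


/-- λ-uniform lower bound for `−Δv₀ + v₀` with `v₀ = a·v̄_{λ,r}·φ` (Proposition 6.5). -/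
theorem lower_bound_neg_lap_v0 (r₁ r a l : ℝ)
    (hr₁ : 0 < r₁) (hr : r₁ < r) (hr1 : r < 1) (ha : 0 < a) (hl : 1 ≤ l)
    (φ : EuclideanSpace ℝ (Fin 2) → ℝ)
    (hφ : ContDiff ℝ (⊤ : ℕ∞) φ)
    (hφ1 : ∀ x : EuclideanSpace ℝ (Fin 2), ‖x‖ ≤ r₁ → φ x = 1)
    (hφ01 : ∀ x : EuclideanSpace ℝ (Fin 2), 0 ≤ φ x ∧ φ x ≤ 1)
    (hφ0 : ∀ x : EuclideanSpace ℝ (Fin 2), r ≤ ‖x‖ → φ x = 0)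
    (hφrad : ∀ x : EuclideanSpace ℝ (Fin 2), (inner ℝ x (gradient φ x) : ℝ) ≤ 0)
    (A₁ A₂ : ℝ)
    (hA₁ : A₁ = sSup ((fun z : EuclideanSpace ℝ (Fin 2) => ‖gradient φ z‖) ''
      {z : EuclideanSpace ℝ (Fin 2) | r₁ ≤ ‖z‖ ∧ ‖z‖ ≤ r}))
    (hA₂ : A₂ = sSup ((fun z : EuclideanSpace ℝ (Fin 2) => |laplacian φ z|) ''
      {z : EuclideanSpace ℝ (Fin 2) | r₁ ≤ ‖z‖ ∧ ‖z‖ ≤ r})) :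
    (∀ x : EuclideanSpace ℝ (Fin 2),
      -(laplacian (fun z => a * vbar l r z * φ z) x) + a * vbar l r x * φ x ≥
        -(8 * a / r₁) * A₁ - a * (4 * Real.log (r / r₁) + Real.log 8) * A₂) ∧
    ∃ K > (0:ℝ), ∀ μ : ℝ, 1 ≤ μ → ∀ x : EuclideanSpace ℝ (Fin 2),
      -(laplacian (fun z => a * vbar μ r z * φ z) x) + a * vbar μ r x * φ x ≥ -K := by
  have key := main_bound r₁ r a hr₁ hr ha φ hφ hφ1 hφ01 hφ0 A₁ A₂ hA₁ hA₂
  constructor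
  · exact key l hl
  · -- nonnegativity facts
    have hbdd1 : BddAbove ((fun z : EuclideanSpace ℝ (Fin 2) => ‖gradient φ z‖) ''
        {z : EuclideanSpace ℝ (Fin 2) | r₁ ≤ ‖z‖ ∧ ‖z‖ ≤ r}) :=
      ((annulus_compact r₁ r).image (continuous_grad_norm hφ)).bddAbove
    have hbdd2 : BddAbove ((fun z : EuclideanSpace ℝ (Fin 2) => |laplacian φ z|) ''
        {z : EuclideanSpace ℝ (Fin 2) | r₁ ≤ ‖z‖ ∧ ‖z‖ ≤ r}) :=
      ((annulus_compact r₁ r).image (continuous_laplacian hφ).abs).bddAbove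
    have hz₀ := annulus_nonempty r₁ r hr₁.le hr.le
    have hA₁0 : 0 ≤ A₁ := by
      rw [hA₁]
      exact le_trans (norm_nonneg _) (le_csSup hbdd1 ⟨_, hz₀, rfl⟩)
    have hA₂0 : 0 ≤ A₂ := by
      rw [hA₂]
      exact le_trans (abs_nonneg _) (le_csSup hbdd2 ⟨_, hz₀, rfl⟩)
    have hB₂0 : 0 ≤ 4 * Real.log (r / r₁) + Real.log 8 := by
      have h1 : 0 ≤ Real.log (r / r₁) :=
        Real.log_nonneg (by rw [le_div_iff₀ hr₁]; linarith)
      have h2 : (0:ℝ) ≤ Real.log 8 := Real.log_nonneg (by norm_num)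
      linarith
    refine ⟨(8 * a / r₁) * A₁ + a * (4 * Real.log (r / r₁) + Real.log 8) * A₂ + 1, ?_, ?_⟩
    · have h1 : 0 ≤ (8 * a / r₁) * A₁ := mul_nonneg (by positivity) hA₁0
      have h2 : 0 ≤ a * (4 * Real.log (r / r₁) + Real.log 8) * A₂ :=
        mul_nonneg (mul_nonneg ha.le hB₂0) hA₂0
      linarith
    · intro μ hμ x
      have := key μ hμ x
      linarith
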